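/- Fix a finite set P of predicate symbols (each with a finite arity) and a finite set C of constant symbols, and a natural number k. Up to logical equivalence, there are only finitely many existentially closed conjunctions of atoms over P and C each of whose connected components contains at most k distinct variables. -/

import Mathlib

/-!
Split a conjunction into its connected components, each variable-free atom forming a component of
its own. Components share no variables, so the existential closure of the conjunction is
equivalent to the conjunction of the closures of its components. A component has at most `k`
variables, so an injective renaming into `Fin (k + 1)` turns it into an equivalent query over
finitely many possible atoms (the arities bound the argument lists), hence into one of finitely
many queries `S`. Moving each `S` into its own block `(k + 1) * i + x` of variables, with `i`
given by an injection of all such `S` into `ℕ`, reassembles an equivalent query from a finite list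
fixed in advance.
-/

/-- A relational atom over predicates `P`, variables `V` and constants `C`. -/
structure Atom (P V C : Type*) where
  pred : P
  args : List (V ⊕ C)
deriving DecidableEq

/-- The variables occurring in an atom. -/
def Atom.vars {P V C : Type*} (a : Atom P V C) : Set V := {v | Sum.inl v ∈ a.args}

/-- The variables occurring in a finite conjunction of atoms. -/
def varsFS {P V C : Type*} (F : Finset (Atom P V C)) : Set V :=
  {v | ∃ a ∈ F, v ∈ a.vars}

/-- Connectivity of variables in the variable-hypergraph of `F`:
reflexive-transitive closure of co-occurrence in an atom. -/
def connR {P V C : Type*} (F : Finset (Atom P V C)) : V → V → Prop :=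
  Relation.ReflTransGen (fun u v : V => ∃ a ∈ F, u ∈ a.vars ∧ v ∈ a.vars)

/-- A first-order structure for the signature. -/
structure Interp (P C : Type*) where
  Dom : Type
  nonempty : Nonempty Dom
  rel : P → List Dom → Prop
  const : C → Dom

/-- Satisfaction of an atom under a variable assignment. -/
def Interp.holdsAtom {P C V : Type*} (M : Interp P C) (σ : V → M.Dom)
    (a : Atom P V C) : Prop :=
  M.rel a.pred (a.args.map (Sum.elim σ M.const))

/-- Satisfaction of the existential closure of a conjunction of atoms. -/
def Interp.satCQ {P C V : Type*} (M : Interp P C) (F : Finset (Atom P V C)) : Prop :=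
  ∃ σ : V → M.Dom, ∀ a ∈ F, M.holdsAtom σ a

/-- Logical equivalence of two existentially closed conjunctions of atoms. -/
def equivCQ {P V C : Type*} (F G : Finset (Atom P V C)) : Prop :=
  ∀ M : Interp P C, M.satCQ F ↔ M.satCQ G

variable {P V W C : Type*}

namespace Atom

def rename (r : V → W) (a : Atom P V C) : Atom P W C :=
  ⟨a.pred, a.args.map (Sum.map r id)⟩

@[simp] lemma pred_rename (r : V → W) (a : Atom P V C) : (a.rename r).pred = a.pred := rfl

@[simp] lemma length_args_rename (r : V → W) (a : Atom P V C) :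
    (a.rename r).args.length = a.args.length :=
  List.length_map _

lemma mem_vars_rename {r : V → W} {a : Atom P V C} {w : W} :
    w ∈ (a.rename r).vars ↔ ∃ v ∈ a.vars, r v = w := by
  simp only [Atom.vars, rename, List.mem_map]
  constructor
  · rintro ⟨v | c, hx, hxw⟩
    · exact ⟨v, hx, Sum.inl_injective hxw⟩
    · cases hxw
  · rintro ⟨v, hv, rfl⟩
    exact ⟨Sum.inl v, hv, rfl⟩

lemma vars_finite (a : Atom P V C) : a.vars.Finite :=
  a.args.finite_toSet.preimage Sum.inl_injective.injOn

instance [Countable P] [Countable V] [Countable C] : Countable (Atom P V C) :=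
  Function.Injective.countable (f := fun a : Atom P V C => (a.pred, a.args))
    fun ⟨_, _⟩ ⟨_, _⟩ h => by cases h; rfl

lemma finite_setOf_length_args_eq [Finite P] [Finite V] [Finite C] (arity : P → ℕ) :
    {a : Atom P V C | a.args.length = arity a.pred}.Finite :=
  (Set.finite_range fun x : Σ p, List.Vector (V ⊕ C) (arity p) =>
    (⟨x.1, x.2.toList⟩ : Atom P V C)).subset fun a ha => ⟨⟨a.pred, a.args, ha⟩, rfl⟩

end Atom

lemma varsFS_mono {F G : Finset (Atom P V C)} (h : F ⊆ G) : varsFS F ⊆ varsFS G :=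
  fun _ ⟨a, ha, hv⟩ => ⟨a, h ha, hv⟩

lemma varsFS_eq_biUnion (F : Finset (Atom P V C)) : varsFS F = ⋃ a ∈ F, a.vars := by
  ext v
  simp [varsFS]

lemma varsFS_finite (F : Finset (Atom P V C)) : (varsFS F).Finite := by
  rw [varsFS_eq_biUnion]
  exact F.finite_toSet.biUnion fun a _ => a.vars_finite

lemma varsFS_biUnion {ι : Type*} [DecidableEq (Atom P V C)] (I : Finset ι)
    (f : ι → Finset (Atom P V C)) : varsFS (I.biUnion f) = ⋃ i ∈ I, varsFS (f i) := by
  ext v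
  simp [varsFS_eq_biUnion]

lemma varsFS_image_rename [DecidableEq (Atom P W C)] (r : V → W) (F : Finset (Atom P V C)) :
    varsFS (F.image (Atom.rename r)) = r '' varsFS F := by
  ext w
  simp only [varsFS, Finset.mem_image, Set.mem_image]
  constructor
  · rintro ⟨_, ⟨a, ha, rfl⟩, hw⟩
    obtain ⟨v, hv, rfl⟩ := Atom.mem_vars_rename.1 hw
    exact ⟨v, ⟨a, ha, hv⟩, rfl⟩
  · rintro ⟨v, ⟨a, ha, hv⟩, rfl⟩
    exact ⟨_, ⟨a, ha, rfl⟩, Atom.mem_vars_rename.2 ⟨v, hv, rfl⟩⟩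

namespace Interp

variable (M : Interp P C)

lemma holdsAtom_congr {σ τ : V → M.Dom} {a : Atom P V C} (h : Set.EqOn σ τ a.vars) :
    M.holdsAtom σ a ↔ M.holdsAtom τ a := by
  unfold Interp.holdsAtom
  rw [List.map_congr_left]
  rintro (v | c) hx
  · exact h hx
  · rfl

lemma holdsAtom_rename (τ : W → M.Dom) (r : V → W) (a : Atom P V C) :
    M.holdsAtom τ (a.rename r) ↔ M.holdsAtom (τ ∘ r) a := by
  unfold Interp.holdsAtom Atom.rename
  rw [List.map_map]
  exact Iff.of_eq (congrArg _ (List.map_congr_left fun x _ => by cases x <;> rfl))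

lemma satCQ_image_rename [DecidableEq (Atom P W C)] {F : Finset (Atom P V C)} {r : V → W}
    {s : W → V} (hs : Set.LeftInvOn s r (varsFS F)) :
    M.satCQ (F.image (Atom.rename r)) ↔ M.satCQ F := by
  constructor
  · rintro ⟨τ, h⟩
    exact ⟨τ ∘ r, fun a ha =>
      (M.holdsAtom_rename τ r a).1 (h _ (Finset.mem_image_of_mem _ ha))⟩
  · rintro ⟨σ, h⟩
    refine ⟨σ ∘ s, Finset.forall_mem_image.2 fun a ha => ?_⟩
    rw [holdsAtom_rename]
    exact (M.holdsAtom_congr (τ := σ) fun v hv => congrArg σ (hs ⟨a, ha, hv⟩)).2 (h a ha)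

lemma satCQ_union [DecidableEq (Atom P V C)] {F G : Finset (Atom P V C)}
    (h : Disjoint (varsFS F) (varsFS G)) : M.satCQ (F ∪ G) ↔ M.satCQ F ∧ M.satCQ G := by
  classical
  constructor
  · rintro ⟨σ, hσ⟩
    exact ⟨⟨σ, fun a ha => hσ a (Finset.mem_union_left _ ha)⟩,
      ⟨σ, fun a ha => hσ a (Finset.mem_union_right _ ha)⟩⟩
  · rintro ⟨⟨σ, hσ⟩, ⟨τ, hτ⟩⟩
    refine ⟨(varsFS F).piecewise σ τ, fun a ha => ?_⟩
    rcases Finset.mem_union.1 ha with haF | haG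
    · have hvars : a.vars ⊆ varsFS F := fun v hv => ⟨a, haF, hv⟩
      exact (M.holdsAtom_congr (((varsFS F).piecewise_eqOn σ τ).mono hvars)).2 (hσ a haF)
    · have hvars : a.vars ⊆ (varsFS F)ᶜ := fun v hv => Set.disjoint_right.1 h ⟨a, haG, hv⟩
      exact (M.holdsAtom_congr (((varsFS F).piecewise_eqOn_compl σ τ).mono hvars)).2 (hτ a haG)

lemma satCQ_biUnion {ι : Type*} [DecidableEq ι] [DecidableEq (Atom P V C)] {I : Finset ι}
    {f : ι → Finset (Atom P V C)} (h : (I : Set ι).PairwiseDisjoint fun i => varsFS (f i)) :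
    M.satCQ (I.biUnion f) ↔ ∀ i ∈ I, M.satCQ (f i) := by
  induction I using Finset.induction_on with
  | empty => simpa using ⟨fun _ => M.nonempty.some, by simp⟩
  | insert i I hi ih =>
    rw [Finset.coe_insert] at h
    have hdisj : Disjoint (varsFS (f i)) (varsFS (I.biUnion f)) := by
      rw [varsFS_biUnion, Set.disjoint_iUnion₂_right]
      exact fun j hj => h (Set.mem_insert i _) (Set.mem_insert_of_mem i hj)
        (ne_of_mem_of_not_mem hj hi).symm
    rw [Finset.biUnion_insert, M.satCQ_union hdisj, ih (h.subset (Set.subset_insert i _)),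
      Finset.forall_mem_insert]

end Interp

section Component

variable (F : Finset (Atom P V C))

lemma connR_symm {u v : V} (h : connR F u v) : connR F v u :=
  Relation.ReflTransGen.mono (fun _ _ ⟨a, ha, hu, hv⟩ => ⟨a, ha, hv, hu⟩) v u
    (Relation.ReflTransGen.swap v u h)

lemma connR_of_mem_vars {a : Atom P V C} (ha : a ∈ F) {u v : V} (hu : u ∈ a.vars)
    (hv : v ∈ a.vars) : connR F u v :=
  .single ⟨a, ha, hu, hv⟩

lemma setOf_connR_finite (u : V) : {w | connR F u w}.Finite := by
  refine ((varsFS_finite F).insert u).subset fun w hw => ?_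
  obtain rfl | ⟨_, -, a, ha, -, hw⟩ := Relation.ReflTransGen.cases_tail hw
  · exact Set.mem_insert _ _
  · exact Set.mem_insert_of_mem _ ⟨a, ha, hw⟩

open Classical in
noncomputable def component (a : Atom P V C) : Finset (Atom P V C) :=
  F.filter fun b => b = a ∨ ∃ u ∈ a.vars, ∃ v ∈ b.vars, connR F u v

open Classical in
lemma mem_component {a b : Atom P V C} :
    b ∈ component F a ↔
      b ∈ F ∧ (b = a ∨ ∃ u ∈ a.vars, ∃ v ∈ b.vars, connR F u v) :=
  Finset.mem_filter

lemma component_subset (a : Atom P V C) : component F a ⊆ F :=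
  fun _ hb => ((mem_component F).1 hb).1

lemma mem_component_self {a : Atom P V C} (ha : a ∈ F) : a ∈ component F a :=
  (mem_component F).2 ⟨ha, .inl rfl⟩

lemma exists_connR_of_mem_varsFS_component {a : Atom P V C} (ha : a ∈ F) {u : V}
    (hu : u ∈ varsFS (component F a)) : ∃ v ∈ a.vars, connR F v u := by
  obtain ⟨b, hb, hub⟩ := hu
  obtain ⟨hbF, rfl | ⟨v, hv, w, hw, hvw⟩⟩ := (mem_component F).1 hb
  · exact ⟨u, hub, .refl⟩
  · exact ⟨v, hv, hvw.trans (connR_of_mem_vars F hbF hw hub)⟩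

lemma component_subset_component {a b : Atom P V C} (ha : a ∈ F) (hb : b ∈ F) {u : V}
    (hua : u ∈ varsFS (component F a)) (hub : u ∈ varsFS (component F b)) :
    component F a ⊆ component F b := by
  obtain ⟨v, hv, hvu⟩ := exists_connR_of_mem_varsFS_component F ha hua
  obtain ⟨w, hw, hwu⟩ := exists_connR_of_mem_varsFS_component F hb hub
  have hwv : connR F w v := hwu.trans (connR_symm F hvu)
  intro c hc
  obtain ⟨hcF, rfl | ⟨x, hx, y, hy, hxy⟩⟩ := (mem_component F).1 hc
  · exact (mem_component F).2 ⟨hcF, .inr ⟨w, hw, v, hv, hwv⟩⟩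
  · exact (mem_component F).2
      ⟨hcF, .inr ⟨w, hw, y, hy, (hwv.trans (connR_of_mem_vars F ha hv hx)).trans hxy⟩⟩

lemma pairwiseDisjoint_varsFS_component [DecidableEq (Atom P V C)] :
    (↑(F.image (component F)) : Set (Finset (Atom P V C))).PairwiseDisjoint varsFS := by
  rw [Finset.coe_image]
  rintro _ ⟨a, ha, rfl⟩ _ ⟨b, hb, rfl⟩ hne
  exact Set.disjoint_left.2 fun u hua hub => hne <|
    (component_subset_component F ha hb hua hub).antisymm
      (component_subset_component F hb ha hub hua)

lemma biUnion_image_component [DecidableEq (Atom P V C)] :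
    (F.image (component F)).biUnion id = F := by
  ext a
  simp only [Finset.mem_biUnion, Finset.mem_image, id]
  constructor
  · rintro ⟨_, ⟨b, -, rfl⟩, ha⟩
    exact component_subset F b ha
  · intro ha
    exact ⟨_, ⟨a, ha, rfl⟩, mem_component_self F ha⟩

lemma ncard_varsFS_component_le {k : ℕ} (hk : ∀ v ∈ varsFS F, {u | connR F v u}.ncard ≤ k)
    {a : Atom P V C} (ha : a ∈ F) : (varsFS (component F a)).ncard ≤ k := by
  obtain h | ⟨u, hu⟩ := (varsFS (component F a)).eq_empty_or_nonempty
  · simp [h]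
  refine (Set.ncard_le_ncard ?_ (setOf_connR_finite F u)).trans
    (hk u (varsFS_mono (component_subset F a) hu))
  intro w hw
  obtain ⟨v, hv, hvu⟩ := exists_connR_of_mem_varsFS_component F ha hu
  obtain ⟨v', hv', hv'w⟩ := exists_connR_of_mem_varsFS_component F ha hw
  exact ((connR_symm F hvu).trans (connR_of_mem_vars F ha hv hv')).trans hv'w

lemma Interp.satCQ_iff_forall_satCQ_component [DecidableEq (Atom P V C)] (M : Interp P C) :
    M.satCQ F ↔ ∀ a ∈ F, M.satCQ (component F a) := by
  conv_lhs => rw [← biUnion_image_component F]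
  rw [M.satCQ_biUnion (f := id) (pairwiseDisjoint_varsFS_component F), Finset.forall_mem_image]
  rfl

end Component

lemma exists_satCQ_image_rename_iff [Nonempty V] [Finite W] [Nonempty W]
    [DecidableEq (Atom P W C)] (F : Finset (Atom P V C)) (hF : (varsFS F).ncard ≤ Nat.card W) :
    ∃ ρ : V → W, ∀ M : Interp P C, M.satCQ (F.image (Atom.rename ρ)) ↔ M.satCQ F := by
  have hle : (varsFS F).encard ≤ (Set.univ : Set W).encard := by
    rwa [Set.encard_univ, ENat.card_eq_coe_natCard, ← (varsFS_finite F).cast_ncard_eq,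
      Nat.cast_le]
  obtain ⟨ρ, -, hρ⟩ := (varsFS_finite F).exists_injOn_of_encard_le hle
  exact ⟨ρ, fun M => M.satCQ_image_rename hρ.leftInvOn_invFunOn⟩

def blockVar (k i : ℕ) (x : Fin (k + 1)) : ℕ := (k + 1) * i + x

section Blocks

variable {k : ℕ}

lemma blockVar_div (i : ℕ) (x : Fin (k + 1)) : blockVar k i x / (k + 1) = i := by
  rw [blockVar, Nat.mul_add_div k.succ_pos, Nat.div_eq_of_lt x.isLt, Nat.add_zero]

lemma blockVar_mod (i : ℕ) (x : Fin (k + 1)) : blockVar k i x % (k + 1) = x := by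
  rw [blockVar, Nat.mul_add_mod, Nat.mod_eq_of_lt x.isLt]

def blockUnion [DecidableEq (Atom P ℕ C)] (idx : Finset (Atom P (Fin (k + 1)) C) → ℕ)
    (T : Finset (Finset (Atom P (Fin (k + 1)) C))) : Finset (Atom P ℕ C) :=
  T.biUnion fun S => S.image (Atom.rename (blockVar k (idx S)))

lemma Interp.satCQ_blockUnion [DecidableEq (Atom P ℕ C)] (M : Interp P C)
    {idx : Finset (Atom P (Fin (k + 1)) C) → ℕ} (hidx : Function.Injective idx)
    (T : Finset (Finset (Atom P (Fin (k + 1)) C))) :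
    M.satCQ (blockUnion idx T) ↔ ∀ S ∈ T, M.satCQ S := by
  classical
  rw [blockUnion, M.satCQ_biUnion]
  · exact forall₂_congr fun S _ => M.satCQ_image_rename
      (s := fun n => ⟨n % (k + 1), Nat.mod_lt _ k.succ_pos⟩)
      fun x _ => Fin.ext (blockVar_mod _ x)
  · rintro S - S' - hne
    simp only [Function.onFun, varsFS_image_rename, Set.disjoint_left]
    rintro _ ⟨x, -, rfl⟩ ⟨y, -, hxy⟩
    exact hne (hidx (by rw [← blockVar_div (idx S) x, ← hxy, blockVar_div]))

end Blocks

theorem stmt4_general {P C : Type} [Fintype P] [Fintype C]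
    (arity : P → ℕ) (k : ℕ) :
    ∃ L : Finset (Finset (Atom P ℕ C)),
      ∀ F : Finset (Atom P ℕ C),
        (∀ a ∈ F, a.args.length = arity a.pred) →
        (∀ v ∈ varsFS F, Set.ncard {u | connR F v u} ≤ k) →
        ∃ G ∈ L, equivCQ F G := by
  classical
  obtain ⟨idx, hidx⟩ := Countable.exists_injective_nat (Finset (Atom P (Fin (k + 1)) C))
  set atoms := (Atom.finite_setOf_length_args_eq (V := Fin (k + 1)) (C := C) arity).toFinset
  refine ⟨atoms.powerset.powerset.image (blockUnion idx), fun F hlen hk => ?_⟩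
  have hsmall (a : Atom P ℕ C) (ha : a ∈ F) : ∃ ρ : ℕ → Fin (k + 1), ∀ M : Interp P C,
      M.satCQ ((component F a).image (Atom.rename ρ)) ↔ M.satCQ (component F a) :=
    exists_satCQ_image_rename_iff _ ((ncard_varsFS_component_le F hk ha).trans (by simp))
  choose! ρ hρ using hsmall
  set T := F.image fun a => (component F a).image (Atom.rename (ρ a))
  refine ⟨blockUnion idx T, Finset.mem_image_of_mem _ ?_, fun M => ?_⟩
  · refine Finset.mem_powerset.2 fun S hS => Finset.mem_powerset.2 fun b hb => ?_
    obtain ⟨a, -, rfl⟩ := Finset.mem_image.1 hS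
    obtain ⟨c, hc, rfl⟩ := Finset.mem_image.1 hb
    simpa [atoms] using hlen c (component_subset F a hc)
  · rw [M.satCQ_iff_forall_satCQ_component, M.satCQ_blockUnion hidx, Finset.forall_mem_image]
    exact forall₂_congr fun a ha => (hρ a ha M).symm

/-- over a finite set of predicates (each with a finite arity) and
a finite set of constants, there are, up to logical equivalence, only finitely
many existentially closed conjunctions of atoms whose connected components each
contain at most `k` distinct variables. -/
theorem stmt4 {P C : Type} [Fintype P] [DecidableEq P] [Fintype C] [DecidableEq C]
    (arity : P → ℕ) (k : ℕ) :
    ∃ L : Finset (Finset (Atom P ℕ C)),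
      ∀ F : Finset (Atom P ℕ C),
        (∀ a ∈ F, a.args.length = arity a.pred) →
        (∀ v ∈ varsFS F, Set.ncard {u | connR F v u} ≤ k) →
        ∃ G ∈ L, equivCQ F G :=
  stmt4_general arity k
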